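/- The formal power series ∑_{n=1}^∞ μ(n) z^n ∈ ℤ[[z]] is not a rational function over ℤ[z]. -/

import Mathlib

/-!
If `q * ∑ aₙ zⁿ = p` with `q ≠ 0`, write `q = zᵗ q₀` with `q₀(0) ≠ 0`. Beyond the degree of `p`
the coefficients of `q₀ * ∑ aₙ zⁿ` vanish, so each `aₙ` is determined by the `deg q₀` values
before it. When the `aₙ` take finitely many values, two such windows of values coincide and
the sequence is eventually periodic. The Möbius function is not: for a period `T` and a large
prime `p ≡ 1 (mod T)` we have `p² ≡ p (mod T)`, but `μ(p²) = 0 ≠ -1 = μ(p)`.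
-/

open Polynomial

def EventuallyPeriodic {α : Type*} (a : ℕ → α) : Prop :=
  ∃ N T, 0 < T ∧ ∀ n, N ≤ n → a (n + T) = a n

namespace EventuallyPeriodic

variable {α : Type*} {a : ℕ → α}

theorem of_window (ha : (Set.range a).Finite) (d N : ℕ)
    (h : ∀ m n, N ≤ m → N ≤ n → (∀ i < d, a (m + i) = a (n + i)) → a (m + d) = a (n + d)) :
    EventuallyPeriodic a := by
  obtain ⟨n₁, hn₁, n₂, hn₂, hlt, hwindow⟩ :=
    (Set.Ici_infinite N).exists_lt_map_eq_of_mapsTo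
      (f := fun n (i : Fin d) => a (n + i)) (t := Set.pi Set.univ fun _ => Set.range a)
      (fun n _ i _ => Set.mem_range_self _) (Set.Finite.pi fun _ => ha)
  rw [Set.mem_Ici] at hn₁ hn₂
  have hshift : ∀ j, a (n₁ + j) = a (n₂ + j) := by
    intro j
    induction j using Nat.strong_induction_on with
    | _ j ih =>
      by_cases hj : j < d
      · exact congrFun hwindow ⟨j, hj⟩
      · obtain ⟨k, rfl⟩ := Nat.exists_eq_add_of_le (not_lt.mp hj)
        have := h (n₁ + k) (n₂ + k) (by omega) (by omega)
          fun i _ => by simpa only [add_assoc] using ih (k + i) (by omega)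
        simpa only [add_assoc, add_comm d k] using this
  refine ⟨n₁, n₂ - n₁, Nat.sub_pos_of_lt hlt, fun n hn => ?_⟩
  obtain ⟨j, rfl⟩ := Nat.exists_eq_add_of_le hn
  rw [hshift j]
  congr 1
  omega

theorem exists_apply_add_mul (ha : EventuallyPeriodic a) :
    ∃ N T, 0 < T ∧ ∀ n, N ≤ n → ∀ k, a (n + k * T) = a n := by
  obtain ⟨N, T, hT, h⟩ := ha
  refine ⟨N, T, hT, fun n hn k => ?_⟩
  induction k with
  | zero => simp
  | succ k ih => rw [add_one_mul, ← add_assoc, h _ (by omega), ih]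

end EventuallyPeriodic

theorem coeff_coe_mul_mk {R : Type*} [Semiring R] (q : R[X]) (a : ℕ → R) {n : ℕ}
    (hn : q.natDegree ≤ n) :
    PowerSeries.coeff n ((q : PowerSeries R) * PowerSeries.mk a) =
      ∑ i ∈ Finset.range (q.natDegree + 1), q.coeff i * a (n - i) := by
  rw [PowerSeries.coeff_mul, Finset.Nat.sum_antidiagonal_eq_sum_range_succ_mk]
  simp only [coeff_coe, PowerSeries.coeff_mk]
  refine (Finset.sum_subset (Finset.range_subset_range.mpr (by omega)) fun i _ hi => ?_).symm
  rw [coeff_eq_zero_of_natDegree_lt (by simpa using hi), zero_mul]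

section NoZeroDivisors

variable {R : Type*} [Ring R] [NoZeroDivisors R] {a : ℕ → R}

theorem apply_add_natDegree_eq_of_window_eq {q : R[X]} (hq : q.coeff 0 ≠ 0) {N : ℕ}
    (h : ∀ n, N ≤ n → PowerSeries.coeff n ((q : PowerSeries R) * PowerSeries.mk a) = 0)
    (m n : ℕ) (hm : N ≤ m) (hn : N ≤ n) (hwindow : ∀ i < q.natDegree, a (m + i) = a (n + i)) :
    a (m + q.natDegree) = a (n + q.natDegree) := by
  have hsplit : ∀ k, PowerSeries.coeff (k + q.natDegree) ((q : PowerSeries R) * .mk a) =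
      ∑ i ∈ Finset.range q.natDegree, q.coeff (i + 1) * a (k + (q.natDegree - 1 - i)) +
        q.coeff 0 * a (k + q.natDegree) := by
    intro k
    rw [coeff_coe_mul_mk q a (by omega), Finset.sum_range_succ']
    congr 1
    refine Finset.sum_congr rfl fun i hi => ?_
    rw [Finset.mem_range] at hi
    congr 2
    omega
  have := (hsplit m).symm.trans ((h _ (by omega)).trans ((h _ (by omega)).symm.trans (hsplit n)))
  rw [Finset.sum_congr rfl fun i hi => by
    rw [hwindow _ (by rw [Finset.mem_range] at hi; omega)]] at this
  exact mul_left_cancel₀ hq (add_left_cancel this)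

theorem EventuallyPeriodic.of_coe_mul_mk_eq (ha : (Set.range a).Finite) {p q : R[X]}
    (hq : q ≠ 0) (h : (q : PowerSeries R) * PowerSeries.mk a = p) : EventuallyPeriodic a := by
  obtain ⟨q₀, hqX, hq₀⟩ := q.exists_eq_pow_rootMultiplicity_mul_and_not_dvd hq 0
  rw [C_0, sub_zero] at hqX hq₀
  rw [X_dvd_iff] at hq₀
  refine .of_window ha q₀.natDegree (p.natDegree + 1)
    (apply_add_natDegree_eq_of_window_eq hq₀ fun n hn => ?_)
  rw [hqX] at h
  have := congrArg (PowerSeries.coeff (n + q.rootMultiplicity 0)) h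
  rwa [Polynomial.coe_mul, Polynomial.coe_pow, coe_X, mul_assoc, PowerSeries.coeff_X_pow_mul,
    coeff_coe, coeff_eq_zero_of_natDegree_lt (by omega)] at this

end NoZeroDivisors

section Moebius

open ArithmeticFunction

theorem finite_range_moebius : (Set.range (⇑moebius : ℕ → ℤ)).Finite :=
  (Set.finite_Icc (-1) 1).subset <|
    Set.range_subset_iff.mpr fun _ => abs_le.mp abs_moebius_le_one

theorem not_eventuallyPeriodic_moebius : ¬ EventuallyPeriodic (⇑moebius : ℕ → ℤ) := by
  intro hμ
  obtain ⟨N, T, hT, h⟩ := hμ.exists_apply_add_mul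
  obtain ⟨p, hp, hNp, hp1⟩ := Nat.exists_prime_gt_modEq_one N hT.ne'
  obtain ⟨j, hj⟩ := (Nat.modEq_iff_dvd' hp.one_le).mp hp1.symm
  have hsq : p ^ 2 = p + p * j * T := by
    rw [mul_assoc, mul_comm j, ← hj, Nat.mul_sub_one, sq]
    have := Nat.le_mul_self p
    omega
  have := h p hNp.le (p * j)
  rw [← hsq, moebius_apply_prime hp, moebius_eq_zero_of_not_squarefree
    ((Nat.squarefree_pow_iff hp.ne_one two_ne_zero).not.mpr (by norm_num))] at this
  norm_num at this

end Moebius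

theorem stmt_12 :
    ¬ ∃ p q : Polynomial ℤ, q ≠ 0 ∧
      (q : PowerSeries ℤ) * (PowerSeries.mk fun n =>
        (ArithmeticFunction.moebius n : ℤ)) = (p : PowerSeries ℤ) := by
  rintro ⟨p, q, hq, h⟩
  exact not_eventuallyPeriodic_moebius (.of_coe_mul_mk_eq finite_range_moebius hq h)
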